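/- Let $s \geq 2$ and let $\Omega \subset \mathbb{R}^d$ be thick. Assume the resolvent estimate for the fractional operator: there exist $C, c > 0$ such that $c e^{-C\mu}\|f\|_{L^2}^2 \leq \|((-\Delta+1)^{s/4} - \mu)f\|_{L^2}^2 + \|f\|_{L^2(\Omega)}^2$ for all $f \in L^2(\mathbb{R}^d)$ and $\mu \geq 0$. Then there exist $C', c' > 0$ such that for all $U = (u_1, u_2) \in H^s(\mathbb{R}^d) \times H^{s/2}(\mathbb{R}^d)$ and all $\lambda \in \mathbb{R}$: $c' e^{-C'|\lambda|}\|U\|^2_{H^{s/2} \times L^2} \leq \|(\mathcal{A}_0 - i\lambda I)U\|^2_{H^{s/2} \times L^2} + \|u_2\|^2_{L^2(\Omega)}$. -/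

import Mathlib

/-!
Write `a = (|ξ|² + 1)^{s/4}`, `vᵢ = F uᵢ`, and choose `σ = ±1` with `σλ = |λ|`. The functions
`w₁ = F⁻¹(a v₁) - σ i u₂` and `w₂ = F⁻¹(a v₁) + σ i u₂` diagonalize `𝒜₀ - iλ`: on the Fourier side
`σ i (a - σλ) F w₁` and `-σ i (a + σλ) F w₂` equal `a (v₂ - iλ v₁) ± σ i (a² v₁ + iλ v₂)`, whose
norms make up the right-hand side. The scalar estimate at `μ = |λ|` bounds `w₁` by this and by its
mass on `Ω`, which is controlled by `w₂ = w₁ + 2σ i u₂` and by `u₂` on `Ω`; since `a + |λ| ≥ 1`,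
`w₂` is bounded directly. The parallelogram law `‖w₁‖² + ‖w₂‖² = 2‖U‖²_ℋ` concludes.
-/

open MeasureTheory ENNReal NNReal Complex
open scoped FourierTransform

/-- A measurable set `Ω ⊆ ℝ^d` is thick if some cube side-length `L` and density `δ` witness
`|Ω ∩ (x + [0,L]^d)| ≥ δ L^d` for every `x`. -/
def Thick {d : ℕ} (Ω : Set (EuclideanSpace ℝ (Fin d))) : Prop :=
  ∃ L > (0 : ℝ), ∃ δ > (0 : ℝ), ∀ x : EuclideanSpace ℝ (Fin d),
    ENNReal.ofReal (δ * L ^ d) ≤ volume (Ω ∩ {y | ∀ i, x i ≤ y i ∧ y i ≤ x i + L})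

lemma ENNReal.coe_sq_le_of_le_add {x y z : ℝ≥0} (h : x ≤ y + z) :
    (x : ℝ≥0∞) ^ 2 ≤ 2 * (y : ℝ≥0∞) ^ 2 + 2 * (z : ℝ≥0∞) ^ 2 := by
  have : x ^ 2 ≤ 2 * y ^ 2 + 2 * z ^ 2 :=
    (pow_le_pow_left₀ x.2 h 2).trans (add_sq_le.trans_eq (mul_add _ _ _))
  exact_mod_cast this

lemma enorm_sub_sq_add_enorm_add_sq (𝕜 : Type*) {E : Type*} [RCLike 𝕜] [NormedAddCommGroup E]
    [InnerProductSpace 𝕜 E] (x y : E) :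
    ‖x - y‖ₑ ^ 2 + ‖x + y‖ₑ ^ 2 = 2 * ‖x‖ₑ ^ 2 + 2 * ‖y‖ₑ ^ 2 := by
  have h : ‖x - y‖₊ ^ 2 + ‖x + y‖₊ ^ 2 = 2 * ‖x‖₊ ^ 2 + 2 * ‖y‖₊ ^ 2 := by
    ext
    push_cast
    linarith [parallelogram_law_with_norm 𝕜 x y]
  simp only [enorm_eq_nnnorm]
  exact_mod_cast h

namespace MeasureTheory

variable {X : Type*} [MeasurableSpace X] {μ : Measure X}

lemma lintegral_nnnorm_sq_eq_eLpNorm_sq {E : Type*} [NormedAddCommGroup E] (f : X → E) :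
    ∫⁻ x, (‖f x‖₊ : ℝ≥0∞) ^ 2 ∂μ = eLpNorm f 2 μ ^ 2 := by
  have h := eLpNorm_nnreal_pow_eq_lintegral (f := f) (μ := μ) (p := 2) two_ne_zero
  norm_num [ENNReal.rpow_two] at h
  exact h.symm

lemma Lp.lintegral_nnnorm_sq_eq {E : Type*} [NormedAddCommGroup E] (f : Lp E 2 μ) :
    ∫⁻ x, (‖f x‖₊ : ℝ≥0∞) ^ 2 ∂μ = ‖f‖ₑ ^ 2 := by
  rw [lintegral_nnnorm_sq_eq_eLpNorm_sq, Lp.enorm_def]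

lemma memLp_two_of_lintegral_nnnorm_sq_lt_top {E : Type*} [NormedAddCommGroup E] {f : X → E}
    (hf : AEStronglyMeasurable f μ) (h : ∫⁻ x, (‖f x‖₊ : ℝ≥0∞) ^ 2 ∂μ < ∞) : MemLp f 2 μ := by
  rw [lintegral_nnnorm_sq_eq_eLpNorm_sq, ENNReal.pow_lt_top_iff] at h
  exact ⟨hf, h.resolve_right two_ne_zero⟩

lemma lintegral_le_const_mul_add_const_mul {f g h : X → ℝ≥0∞} {p q : ℝ≥0∞} (hp : p ≠ ∞)
    (hq : q ≠ ∞) (hg : AEMeasurable g μ) (hfgh : ∀ᵐ x ∂μ, f x ≤ p * g x + q * h x) :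
    ∫⁻ x, f x ∂μ ≤ p * ∫⁻ x, g x ∂μ + q * ∫⁻ x, h x ∂μ :=
  calc ∫⁻ x, f x ∂μ ≤ ∫⁻ x, (p * g x + q * h x) ∂μ := lintegral_mono_ae hfgh
    _ = p * ∫⁻ x, g x ∂μ + q * ∫⁻ x, h x ∂μ := by
      rw [lintegral_add_left' (hg.const_mul p), lintegral_const_mul' p g hp,
        lintegral_const_mul' q h hq]

variable {𝕜 E : Type*} [NormedAddCommGroup E] {p : ℝ≥0∞}

lemma Lp.coeFn_add_smul [NormedRing 𝕜] [Module 𝕜 E] [IsBoundedSMul 𝕜 E] (g u : Lp E p μ)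
    (θ : 𝕜) : ⇑(g + θ • u) =ᵐ[μ] fun x => g x + θ • u x := by
  filter_upwards [Lp.coeFn_add g (θ • u), Lp.coeFn_smul θ u] with x h₁ h₂
  rw [h₁, Pi.add_apply, h₂, Pi.smul_apply]

lemma Lp.coeFn_sub_smul [NormedRing 𝕜] [Module 𝕜 E] [IsBoundedSMul 𝕜 E] (g u : Lp E p μ)
    (θ : 𝕜) : ⇑(g - θ • u) =ᵐ[μ] fun x => g x - θ • u x := by
  filter_upwards [Lp.coeFn_sub g (θ • u), Lp.coeFn_smul θ u] with x h₁ h₂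
  rw [h₁, Pi.sub_apply, h₂, Pi.smul_apply]

lemma Lp.lintegral_sub_smul_add_lintegral_add_smul [RCLike 𝕜] [InnerProductSpace 𝕜 E] {θ : 𝕜}
    (hθ : ‖θ‖₊ = 1) (g u : Lp E 2 μ) :
    (∫⁻ x, (‖(g - θ • u) x‖₊ : ℝ≥0∞) ^ 2 ∂μ) + ∫⁻ x, (‖(g + θ • u) x‖₊ : ℝ≥0∞) ^ 2 ∂μ =
      2 * ((∫⁻ x, (‖g x‖₊ : ℝ≥0∞) ^ 2 ∂μ) + ∫⁻ x, (‖u x‖₊ : ℝ≥0∞) ^ 2 ∂μ) := by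
  simp only [Lp.lintegral_nnnorm_sq_eq]
  rw [enorm_sub_sq_add_enorm_add_sq 𝕜, enorm_smul, enorm_eq_nnnorm θ, hθ, ENNReal.coe_one,
    one_mul, mul_add]

lemma Lp.setLIntegral_sub_smul_le [NormedField 𝕜] [NormedSpace 𝕜 E] {θ : 𝕜} (hθ : ‖θ‖₊ = 1)
    (g u : Lp E 2 μ) (Ω : Set X) :
    ∫⁻ x in Ω, (‖(g - θ • u) x‖₊ : ℝ≥0∞) ^ 2 ∂μ ≤
      2 * ∫⁻ x, (‖(g + θ • u) x‖₊ : ℝ≥0∞) ^ 2 ∂μ + 8 * ∫⁻ x in Ω, (‖u x‖₊ : ℝ≥0∞) ^ 2 ∂μ := by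
  have hpt : ∀ᵐ x ∂μ, (‖(g - θ • u) x‖₊ : ℝ≥0∞) ^ 2 ≤
      2 * (‖(g + θ • u) x‖₊ : ℝ≥0∞) ^ 2 + 8 * (‖u x‖₊ : ℝ≥0∞) ^ 2 := by
    filter_upwards [Lp.coeFn_sub_smul g u θ, Lp.coeFn_add_smul g u θ] with x h₁ h₂
    have hb : ‖θ • u x‖₊ = ‖u x‖₊ := by rw [nnnorm_smul, hθ, one_mul]
    have : ‖(g - θ • u) x‖₊ ≤ ‖(g + θ • u) x‖₊ + 2 * ‖u x‖₊ := by
      rw [h₁, h₂]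
      calc ‖g x - θ • u x‖₊ = ‖(g x + θ • u x) - (θ • u x + θ • u x)‖₊ := by abel_nf
        _ ≤ ‖g x + θ • u x‖₊ + (‖θ • u x‖₊ + ‖θ • u x‖₊) :=
          (nnnorm_sub_le _ _).trans (add_le_add le_rfl (nnnorm_add_le _ _))
        _ = ‖g x + θ • u x‖₊ + 2 * ‖u x‖₊ := by rw [hb, two_mul]
    calc (‖(g - θ • u) x‖₊ : ℝ≥0∞) ^ 2
        ≤ 2 * (‖(g + θ • u) x‖₊ : ℝ≥0∞) ^ 2 + 2 * ((2 * ‖u x‖₊ : ℝ≥0) : ℝ≥0∞) ^ 2 :=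
          ENNReal.coe_sq_le_of_le_add this
      _ = 2 * (‖(g + θ • u) x‖₊ : ℝ≥0∞) ^ 2 + 8 * (‖u x‖₊ : ℝ≥0∞) ^ 2 := by push_cast; ring
  calc ∫⁻ x in Ω, (‖(g - θ • u) x‖₊ : ℝ≥0∞) ^ 2 ∂μ
      ≤ 2 * ∫⁻ x in Ω, (‖(g + θ • u) x‖₊ : ℝ≥0∞) ^ 2 ∂μ +
          8 * ∫⁻ x in Ω, (‖u x‖₊ : ℝ≥0∞) ^ 2 ∂μ :=
        lintegral_le_const_mul_add_const_mul ofNat_ne_top ofNat_ne_top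
          ((Lp.aestronglyMeasurable (g + θ • u)).restrict.enorm.pow_const 2)
          (ae_restrict_of_ae hpt)
    _ ≤ _ := by gcongr; exact Measure.restrict_le_self

end MeasureTheory

lemma ofReal_sq_mul_nnnorm_sq (r : ℝ) (z : ℂ) :
    ENNReal.ofReal (r ^ 2) * (‖z‖₊ : ℝ≥0∞) ^ 2 = (‖(r : ℂ) * z‖₊ : ℝ≥0∞) ^ 2 := by
  rw [nnnorm_mul, Complex.nnnorm_real, ENNReal.coe_mul, mul_pow, ← sq_abs,
    ENNReal.ofReal_pow (abs_nonneg r), ← Real.enorm_eq_ofReal_abs]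
  rfl

lemma nnnorm_ofReal_mul_I {σ : ℝ} (hσ : σ ^ 2 = 1) : ‖(σ : ℂ) * I‖₊ = 1 := by
  have : |σ| = 1 := (pow_left_inj₀ (abs_nonneg σ) zero_le_one two_ne_zero).1
    (by rw [sq_abs, hσ, one_pow])
  ext
  simp [this]

lemma nnnorm_le_nnnorm_ofReal_mul {r : ℝ} (hr : 1 ≤ r) (z : ℂ) : ‖z‖₊ ≤ ‖(r : ℂ) * z‖₊ := by
  rw [nnnorm_mul]
  refine le_mul_of_one_le_left zero_le ?_
  rw [← NNReal.coe_le_coe, coe_nnnorm, Complex.norm_real, Real.norm_of_nonneg (by linarith)]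
  exact hr

lemma nnnorm_diag_le {a lam σ : ℝ} (hσ : σ ^ 2 = 1) (v₁ v₂ : ℂ) :
    ‖((a - σ * lam : ℝ) : ℂ) * (a * v₁ - σ * I * v₂)‖₊ ≤
      ‖(a : ℂ) * (v₂ - I * lam * v₁)‖₊ + ‖((a ^ 2 : ℝ) : ℂ) * v₁ + I * lam * v₂‖₊ := by
  have hσ' : (σ : ℂ) ^ 2 = 1 := by exact_mod_cast hσ
  have hdiag : (σ : ℂ) * I * (((a - σ * lam : ℝ) : ℂ) * (a * v₁ - σ * I * v₂)) =
      (a : ℂ) * (v₂ - I * lam * v₁) + σ * I * (((a ^ 2 : ℝ) : ℂ) * v₁ + I * lam * v₂) := by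
    push_cast
    linear_combination (a * v₂ - I * lam * a * v₁ + σ * I ^ 2 * lam * v₂) * hσ' -
      a * v₂ * σ ^ 2 * I_sq
  calc ‖((a - σ * lam : ℝ) : ℂ) * (a * v₁ - σ * I * v₂)‖₊
      = ‖(σ : ℂ) * I * (((a - σ * lam : ℝ) : ℂ) * (a * v₁ - σ * I * v₂))‖₊ := by
        rw [nnnorm_mul ((σ : ℂ) * I), nnnorm_ofReal_mul_I hσ, one_mul]
    _ ≤ _ := hdiag ▸ nnnorm_add_le _ _
    _ = _ := by rw [nnnorm_mul ((σ : ℂ) * I), nnnorm_ofReal_mul_I hσ, one_mul]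

section Diagonalization

variable {Y : Type*} [MeasurableSpace Y] {ν : Measure Y} {a : Y → ℝ} {v₁ v₂ : Y → ℂ}
  (ha : Measurable a) (hv₁ : AEStronglyMeasurable v₁ ν) (hv₂ : AEStronglyMeasurable v₂ ν)
  {lam σ : ℝ} (hσ : σ ^ 2 = 1)
include ha hv₁ hv₂ hσ

lemma lintegral_diag_sub_le :
    ∫⁻ ξ, (‖((a ξ - σ * lam : ℝ) : ℂ) * (a ξ * v₁ ξ - σ * I * v₂ ξ)‖₊ : ℝ≥0∞) ^ 2 ∂ν ≤
      2 * ((∫⁻ ξ, (‖(a ξ : ℂ) * (v₂ ξ - I * lam * v₁ ξ)‖₊ : ℝ≥0∞) ^ 2 ∂ν) +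
        ∫⁻ ξ, (‖((a ξ ^ 2 : ℝ) : ℂ) * v₁ ξ + I * lam * v₂ ξ‖₊ : ℝ≥0∞) ^ 2 ∂ν) := by
  rw [mul_add]
  exact lintegral_le_const_mul_add_const_mul ofNat_ne_top ofNat_ne_top (by fun_prop)
    (ae_of_all _ fun ξ => ENNReal.coe_sq_le_of_le_add (nnnorm_diag_le hσ _ _))

lemma lintegral_diag_add_le (h1 : ∀ ξ, 1 ≤ a ξ + σ * lam) :
    ∫⁻ ξ, (‖(a ξ : ℂ) * v₁ ξ + σ * I * v₂ ξ‖₊ : ℝ≥0∞) ^ 2 ∂ν ≤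
      2 * ((∫⁻ ξ, (‖(a ξ : ℂ) * (v₂ ξ - I * lam * v₁ ξ)‖₊ : ℝ≥0∞) ^ 2 ∂ν) +
        ∫⁻ ξ, (‖((a ξ ^ 2 : ℝ) : ℂ) * v₁ ξ + I * lam * v₂ ξ‖₊ : ℝ≥0∞) ^ 2 ∂ν) := by
  refine (lintegral_mono fun ξ => ?_).trans
    (lintegral_diag_sub_le ha hv₁ hv₂ (σ := -σ) (by rwa [neg_sq]))
  gcongr
  calc ‖(a ξ : ℂ) * v₁ ξ + σ * I * v₂ ξ‖₊
      ≤ ‖((a ξ + σ * lam : ℝ) : ℂ) * (a ξ * v₁ ξ + σ * I * v₂ ξ)‖₊ :=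
        nnnorm_le_nnnorm_ofReal_mul (h1 ξ) _
    _ = _ := by congr 2 <;> push_cast <;> ring

end Diagonalization

lemma ENNReal.mul_le_of_parallelogram_bounds {k N₁ N₂ L R T : ℝ≥0∞} (hk : k ≤ 1)
    (h₁ : k * N₁ ≤ 2 * R + (2 * N₂ + 8 * T)) (h₂ : N₂ ≤ 2 * R) (hN : N₁ + N₂ = 2 * L) :
    k * L ≤ 4 * (R + T) := by
  have : 2 * (k * L) ≤ 2 * (4 * (R + T)) :=
    calc 2 * (k * L) = k * N₁ + k * N₂ := by rw [← mul_add, hN]; ring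
      _ ≤ 2 * R + (2 * N₂ + 8 * T) + N₂ := add_le_add h₁ (mul_le_of_le_one_left' hk)
      _ ≤ 2 * R + (2 * (2 * R) + 8 * T) + 2 * R := by gcongr
      _ = 2 * (4 * (R + T)) := by ring
  exact (ENNReal.mul_le_mul_iff_right two_ne_zero ofNat_ne_top).1 this

section KleinGordon

variable {X Y : Type*} [MeasurableSpace X] [MeasurableSpace Y] {μ : Measure X} {ν : Measure Y}
  (F : Lp ℂ 2 μ ≃ₗᵢ[ℂ] Lp ℂ 2 ν) {a : Y → ℝ} (Ω : Set X)

theorem kg_energy_le_of_scalar_resolvent (ha : Measurable a) (ha1 : ∀ ξ, 1 ≤ a ξ)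
    {k : ℝ≥0∞} (hk : k ≤ 1) {lam σ : ℝ} (hσ : σ ^ 2 = 1) (hσlam : σ * lam = |lam|)
    (hres : ∀ f : Lp ℂ 2 μ, k * ∫⁻ x, (‖f x‖₊ : ℝ≥0∞) ^ 2 ∂μ ≤
      (∫⁻ ξ, (‖((a ξ - |lam| : ℝ) : ℂ) * F f ξ‖₊ : ℝ≥0∞) ^ 2 ∂ν) +
        ∫⁻ x in Ω, (‖f x‖₊ : ℝ≥0∞) ^ 2 ∂μ)
    (u₁ u₂ : Lp ℂ 2 μ)
    (hu₁ : ∫⁻ ξ, ENNReal.ofReal (a ξ ^ 2) * (‖F u₁ ξ‖₊ : ℝ≥0∞) ^ 2 ∂ν < ∞) :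
    k * ((∫⁻ ξ, ENNReal.ofReal (a ξ ^ 2) * (‖F u₁ ξ‖₊ : ℝ≥0∞) ^ 2 ∂ν) +
        ∫⁻ x, (‖u₂ x‖₊ : ℝ≥0∞) ^ 2 ∂μ) ≤
      4 * ((∫⁻ ξ, ENNReal.ofReal (a ξ ^ 2) * (‖F u₂ ξ - I * lam * F u₁ ξ‖₊ : ℝ≥0∞) ^ 2 ∂ν) +
        (∫⁻ ξ, (‖((a ξ ^ 2 : ℝ) : ℂ) * F u₁ ξ + I * lam * F u₂ ξ‖₊ : ℝ≥0∞) ^ 2 ∂ν) +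
        ∫⁻ x in Ω, (‖u₂ x‖₊ : ℝ≥0∞) ^ 2 ∂μ) := by
  simp only [ofReal_sq_mul_nnnorm_sq] at hu₁ ⊢
  rw [← hσlam] at hres
  have hF₁ := Lp.aestronglyMeasurable (F u₁)
  have hF₂ := Lp.aestronglyMeasurable (F u₂)
  have hav : MemLp (fun ξ => (a ξ : ℂ) * F u₁ ξ) 2 ν :=
    memLp_two_of_lintegral_nnnorm_sq_lt_top (by fun_prop) hu₁
  have hθ : ‖(σ : ℂ) * I‖₊ = 1 := nnnorm_ofReal_mul_I hσ
  set g := F.symm (hav.toLp _)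
  have hFg : F g =ᵐ[ν] fun ξ => (a ξ : ℂ) * F u₁ ξ := by
    rw [LinearIsometryEquiv.apply_symm_apply]
    exact hav.coeFn_toLp
  set w₁ := g - ((σ : ℂ) * I) • u₂
  set w₂ := g + ((σ : ℂ) * I) • u₂
  have hFw₁ : ∀ᵐ ξ ∂ν, F w₁ ξ = a ξ * F u₁ ξ - σ * I * F u₂ ξ := by
    rw [map_sub, map_smul]
    filter_upwards [Lp.coeFn_sub_smul (F g) (F u₂) ((σ : ℂ) * I), hFg] with ξ h₁ h₂
    rw [h₁, h₂, smul_eq_mul]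
  have hFw₂ : ∀ᵐ ξ ∂ν, F w₂ ξ = a ξ * F u₁ ξ + σ * I * F u₂ ξ := by
    rw [map_add, map_smul]
    filter_upwards [Lp.coeFn_add_smul (F g) (F u₂) ((σ : ℂ) * I), hFg] with ξ h₁ h₂
    rw [h₁, h₂, smul_eq_mul]
  set R := (∫⁻ ξ, (‖(a ξ : ℂ) * (F u₂ ξ - I * lam * F u₁ ξ)‖₊ : ℝ≥0∞) ^ 2 ∂ν) +
    ∫⁻ ξ, (‖((a ξ ^ 2 : ℝ) : ℂ) * F u₁ ξ + I * lam * F u₂ ξ‖₊ : ℝ≥0∞) ^ 2 ∂ν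
  have hw₁ : ∫⁻ ξ, (‖((a ξ - σ * lam : ℝ) : ℂ) * F w₁ ξ‖₊ : ℝ≥0∞) ^ 2 ∂ν ≤ 2 * R := by
    rw [lintegral_congr_ae (hFw₁.mono fun ξ hξ => by rw [hξ])]
    exact lintegral_diag_sub_le ha hF₁ hF₂ hσ
  have hw₂ : ∫⁻ x, (‖w₂ x‖₊ : ℝ≥0∞) ^ 2 ∂μ ≤ 2 * R := by
    rw [Lp.lintegral_nnnorm_sq_eq, ← F.enorm_map, ← Lp.lintegral_nnnorm_sq_eq,
      lintegral_congr_ae (hFw₂.mono fun ξ hξ => by rw [hξ])]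
    exact lintegral_diag_add_le ha hF₁ hF₂ hσ fun ξ => by
      linarith [ha1 ξ, hσlam ▸ abs_nonneg lam]
  have hN := Lp.lintegral_sub_smul_add_lintegral_add_smul hθ g u₂
  rw [Lp.lintegral_nnnorm_sq_eq g, F.symm.enorm_map, Lp.enorm_toLp,
    ← lintegral_nnnorm_sq_eq_eLpNorm_sq] at hN
  exact ENNReal.mul_le_of_parallelogram_bounds hk ((hres w₁).trans
    (add_le_add hw₁ (Lp.setLIntegral_sub_smul_le hθ g u₂ Ω))) hw₂ hN

theorem kg_resolvent_estimate_of_symbol (ha : Measurable a) (ha1 : ∀ ξ, 1 ≤ a ξ) {C c : ℝ}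
    (hC : 0 ≤ C)
    (hres : ∀ f : Lp ℂ 2 μ, ∀ mu : ℝ, 0 ≤ mu →
      ENNReal.ofReal (c * Real.exp (-C * mu)) * ∫⁻ x, (‖f x‖₊ : ℝ≥0∞) ^ 2 ∂μ ≤
        (∫⁻ ξ, (‖((a ξ - mu : ℝ) : ℂ) * F f ξ‖₊ : ℝ≥0∞) ^ 2 ∂ν) +
          ∫⁻ x in Ω, (‖f x‖₊ : ℝ≥0∞) ^ 2 ∂μ)
    (lam : ℝ) (u₁ u₂ : Lp ℂ 2 μ)
    (hu₁ : ∫⁻ ξ, ENNReal.ofReal (a ξ ^ 2) * (‖F u₁ ξ‖₊ : ℝ≥0∞) ^ 2 ∂ν < ∞) :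
    ENNReal.ofReal (min c 1 / 4 * Real.exp (-C * |lam|)) *
        ((∫⁻ ξ, ENNReal.ofReal (a ξ ^ 2) * (‖F u₁ ξ‖₊ : ℝ≥0∞) ^ 2 ∂ν) +
          ∫⁻ x, (‖u₂ x‖₊ : ℝ≥0∞) ^ 2 ∂μ) ≤
      (∫⁻ ξ, ENNReal.ofReal (a ξ ^ 2) * (‖F u₂ ξ - I * lam * F u₁ ξ‖₊ : ℝ≥0∞) ^ 2 ∂ν) +
        (∫⁻ ξ, (‖((a ξ ^ 2 : ℝ) : ℂ) * F u₁ ξ + I * lam * F u₂ ξ‖₊ : ℝ≥0∞) ^ 2 ∂ν) +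
        ∫⁻ x in Ω, (‖u₂ x‖₊ : ℝ≥0∞) ^ 2 ∂μ := by
  obtain ⟨σ, hσ, hσlam⟩ : ∃ σ : ℝ, σ ^ 2 = 1 ∧ σ * lam = |lam| := by
    rcases le_or_gt 0 lam with h | h
    · exact ⟨1, one_pow 2, by rw [one_mul, abs_of_nonneg h]⟩
    · exact ⟨-1, by norm_num, by rw [neg_one_mul, abs_of_neg h]⟩
  set e := Real.exp (-C * |lam|)
  have he : 0 < e := Real.exp_pos _
  have he1 : e ≤ 1 := Real.exp_le_one_iff.2 (by nlinarith [abs_nonneg lam])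
  have hk : ENNReal.ofReal (min c 1 * e) ≤ 1 :=
    ENNReal.ofReal_le_one.2 ((mul_le_mul_of_nonneg_right (min_le_right c 1) he.le).trans
      (by rwa [one_mul]))
  have hres' (f : Lp ℂ 2 μ) := (mul_le_mul_left (ENNReal.ofReal_le_ofReal
    (mul_le_mul_of_nonneg_right (min_le_left c 1) he.le)) _).trans (hres f |lam| (abs_nonneg lam))
  have key := kg_energy_le_of_scalar_resolvent F Ω ha ha1 hk hσ hσlam hres' u₁ u₂ hu₁
  have h4 : ENNReal.ofReal (min c 1 * e) = 4 * ENNReal.ofReal (min c 1 / 4 * e) := by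
    rw [← ENNReal.ofReal_ofNat 4, ← ENNReal.ofReal_mul (by norm_num)]
    ring_nf
  rw [h4, mul_assoc] at key
  exact (ENNReal.mul_le_mul_iff_right four_ne_zero ofNat_ne_top).1 key

end KleinGordon

theorem kg_resolvent_estimate_general (d : ℕ) (s : ℝ) (hs : 2 ≤ s)
    (Ω : Set (EuclideanSpace ℝ (Fin d)))
    (F : Lp ℂ 2 (volume : Measure (EuclideanSpace ℝ (Fin d))) ≃ₗᵢ[ℂ]
      Lp ℂ 2 (volume : Measure (EuclideanSpace ℝ (Fin d))))
    (C c : ℝ) (hC : 0 < C) (hc : 0 < c)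
    (hres : ∀ f : Lp ℂ 2 (volume : Measure (EuclideanSpace ℝ (Fin d))), ∀ mu : ℝ, 0 ≤ mu →
      ENNReal.ofReal (c * Real.exp (-C * mu)) * ∫⁻ x, (‖f x‖₊ : ℝ≥0∞) ^ 2 ≤
        (∫⁻ ξ, (‖((((‖ξ‖ ^ 2 + 1) ^ (s / 4) - mu : ℝ) : ℂ) * (F f) ξ)‖₊ : ℝ≥0∞) ^ 2) +
        ∫⁻ x in Ω, (‖f x‖₊ : ℝ≥0∞) ^ 2) :
    ∃ C' > (0 : ℝ), ∃ c' > (0 : ℝ), ∀ lam : ℝ,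
      ∀ u₁ u₂ : Lp ℂ 2 (volume : Measure (EuclideanSpace ℝ (Fin d))),
        -- `u₁ ∈ H^s`
        (∫⁻ ξ, ENNReal.ofReal ((‖ξ‖ ^ 2 + 1) ^ s) * (‖(F u₁) ξ‖₊ : ℝ≥0∞) ^ 2) < ⊤ →
        -- `u₂ ∈ H^{s/2}`
        (∫⁻ ξ, ENNReal.ofReal ((‖ξ‖ ^ 2 + 1) ^ (s / 2)) * (‖(F u₂) ξ‖₊ : ℝ≥0∞) ^ 2) < ⊤ →
        ENNReal.ofReal (c' * Real.exp (-C' * |lam|)) *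
            ((∫⁻ ξ, ENNReal.ofReal ((‖ξ‖ ^ 2 + 1) ^ (s / 2)) * (‖(F u₁) ξ‖₊ : ℝ≥0∞) ^ 2) +
              ∫⁻ x, (‖u₂ x‖₊ : ℝ≥0∞) ^ 2) ≤
          (∫⁻ ξ, ENNReal.ofReal ((‖ξ‖ ^ 2 + 1) ^ (s / 2)) *
              (‖(F u₂) ξ - (Complex.I * lam) * (F u₁) ξ‖₊ : ℝ≥0∞) ^ 2) +
          (∫⁻ ξ, (‖((((‖ξ‖ ^ 2 + 1) ^ (s / 2) : ℝ) : ℂ) * (F u₁) ξ +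
              (Complex.I * lam) * (F u₂) ξ)‖₊ : ℝ≥0∞) ^ 2) +
          ∫⁻ x in Ω, (‖u₂ x‖₊ : ℝ≥0∞) ^ 2 := by
  have hx (ξ : EuclideanSpace ℝ (Fin d)) : 1 ≤ ‖ξ‖ ^ 2 + 1 := le_add_of_nonneg_left (sq_nonneg _)
  have hsq (ξ : EuclideanSpace ℝ (Fin d)) :
      ((‖ξ‖ ^ 2 + 1) ^ (s / 4)) ^ 2 = (‖ξ‖ ^ 2 + 1) ^ (s / 2) := by
    rw [← Real.rpow_two, ← Real.rpow_mul (by linarith [hx ξ])]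
    ring_nf
  refine ⟨C, hC, min c 1 / 4, div_pos (lt_min hc one_pos) four_pos,
    fun lam u₁ u₂ hu₁ _ => ?_⟩
  have key := kg_resolvent_estimate_of_symbol F Ω (a := fun ξ => (‖ξ‖ ^ 2 + 1) ^ (s / 4))
    (by fun_prop) (fun ξ => Real.one_le_rpow (hx ξ) (by linarith)) hC.le hres lam u₁ u₂ ?_
  · simpa only [hsq] using key
  · simp only [hsq]
    refine (lintegral_mono fun ξ => ?_).trans_lt hu₁
    gcongr
    exacts [hx ξ, by linarith]

/-- Resolvent estimate for the Klein–Gordon generator `𝒜₀(u₁,u₂) = (u₂, -(-Δ+1)^{s/2}u₁)` on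
`ℋ = H^{s/2} × L²`: assuming the scalar resolvent estimate for `(-Δ+1)^{s/4}`, there are
`C', c' > 0` with `c' e^{-C'|λ|} ‖U‖²_{H^{s/2}×L²} ≤ ‖(𝒜₀ - iλ)U‖²_{H^{s/2}×L²} + ‖u₂‖²_{L²(Ω)}`
for all `U = (u₁,u₂) ∈ H^s × H^{s/2}` and `λ ∈ ℝ`.  All operators and Sobolev norms are realized
on the Fourier side via the Fourier–Plancherel unitary `F`, with symbol `(|ξ|²+1)`. -/
theorem kg_resolvent_estimate (d : ℕ) (s : ℝ) (hs : 2 ≤ s)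
    (Ω : Set (EuclideanSpace ℝ (Fin d))) (hΩm : MeasurableSet Ω) (hΩ : Thick Ω)
    (F : Lp ℂ 2 (volume : Measure (EuclideanSpace ℝ (Fin d))) ≃ₗᵢ[ℂ]
      Lp ℂ 2 (volume : Measure (EuclideanSpace ℝ (Fin d))))
    (hF : ∀ f : Lp ℂ 2 (volume : Measure (EuclideanSpace ℝ (Fin d))),
      Integrable (⇑f) volume → (⇑(F f)) =ᵐ[volume] 𝓕 ⇑f)
    (C c : ℝ) (hC : 0 < C) (hc : 0 < c)
    (hres : ∀ f : Lp ℂ 2 (volume : Measure (EuclideanSpace ℝ (Fin d))), ∀ mu : ℝ, 0 ≤ mu →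
      ENNReal.ofReal (c * Real.exp (-C * mu)) * ∫⁻ x, (‖f x‖₊ : ℝ≥0∞) ^ 2 ≤
        (∫⁻ ξ, (‖((((‖ξ‖ ^ 2 + 1) ^ (s / 4) - mu : ℝ) : ℂ) * (F f) ξ)‖₊ : ℝ≥0∞) ^ 2) +
        ∫⁻ x in Ω, (‖f x‖₊ : ℝ≥0∞) ^ 2) :
    ∃ C' > (0 : ℝ), ∃ c' > (0 : ℝ), ∀ lam : ℝ,
      ∀ u₁ u₂ : Lp ℂ 2 (volume : Measure (EuclideanSpace ℝ (Fin d))),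
        -- `u₁ ∈ H^s`
        (∫⁻ ξ, ENNReal.ofReal ((‖ξ‖ ^ 2 + 1) ^ s) * (‖(F u₁) ξ‖₊ : ℝ≥0∞) ^ 2) < ⊤ →
        -- `u₂ ∈ H^{s/2}`
        (∫⁻ ξ, ENNReal.ofReal ((‖ξ‖ ^ 2 + 1) ^ (s / 2)) * (‖(F u₂) ξ‖₊ : ℝ≥0∞) ^ 2) < ⊤ →
        ENNReal.ofReal (c' * Real.exp (-C' * |lam|)) *
            ((∫⁻ ξ, ENNReal.ofReal ((‖ξ‖ ^ 2 + 1) ^ (s / 2)) * (‖(F u₁) ξ‖₊ : ℝ≥0∞) ^ 2) +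
              ∫⁻ x, (‖u₂ x‖₊ : ℝ≥0∞) ^ 2) ≤
          (∫⁻ ξ, ENNReal.ofReal ((‖ξ‖ ^ 2 + 1) ^ (s / 2)) *
              (‖(F u₂) ξ - (Complex.I * lam) * (F u₁) ξ‖₊ : ℝ≥0∞) ^ 2) +
          (∫⁻ ξ, (‖((((‖ξ‖ ^ 2 + 1) ^ (s / 2) : ℝ) : ℂ) * (F u₁) ξ +
              (Complex.I * lam) * (F u₂) ξ)‖₊ : ℝ≥0∞) ^ 2) +
          ∫⁻ x in Ω, (‖u₂ x‖₊ : ℝ≥0∞) ^ 2 :=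
  kg_resolvent_estimate_general d s hs Ω F C c hC hc hres
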